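/- Fix an integer M ≥ 1, reals 0 < γ_b < γ_t < 1, w ∈ (0,1), Ae > 0, and a detection threshold z_th with 0 < z_th < Ae. Define t₀(σ,σ₀) = (1−γ_b)·Q(√M·z_th/σ₀) + γ_b·Q((z_th−Ae)/√(σ₀²/M+σ²)) and t₁(σ,σ₀) = (1−γ_t)·Q(√M·z_th/σ₀) + γ_t·Q((z_th−Ae)/√(σ₀²/M+σ²)). Then as (σ, σ₀) → (0⁺, 0⁺), the gap C_M(γ_b, γ_t, w) − C_M(t₀(σ,σ₀), t₁(σ,σ₀), w) tends to 0 (asymptotic tightness of the vector transmission-rate bounds, Theorem 3). -/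

import Mathlib

/-! As `σ, σ₀ → 0⁺` the argument `√M z_th / σ₀` of the first `Q` tends to `+∞` and the argument
`(z_th − Ae) / √(σ₀²/M + σ²)` of the second to `−∞`, so `Q` of them tends to `0` and `1` and the
detection probabilities `t₀, t₁` tend to `γ_b, γ_t`. Since `C_M` is continuous in its two probability
arguments (a finite sum of `negMulLog` of polynomials, minus binary entropies), the gap tends to `0`. -/

open MeasureTheory Filter Real

/-- The Gaussian tail function `Q(x) = ∫_x^∞ (1/√(2π)) e^{−u²/2} du`. -/
noncomputable def gaussQ (x : ℝ) : ℝ :=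
  ∫ u in Set.Ioi x, (Real.sqrt (2 * Real.pi))⁻¹ * Real.exp (-u ^ 2 / 2)

/-- Binary entropy function. -/
noncomputable def H2 (x : ℝ) : ℝ := -x * Real.log x - (1 - x) * Real.log (1 - x)

/-- Hamming weight of a binary vector. -/
def hammingWt {M : ℕ} (y : Fin M → Bool) : ℕ :=
  (Finset.univ.filter fun i => y i = true).card

/-- Product Bernoulli probability of the binary vector `y` with parameter `p`. -/
noncomputable def bernVec (M : ℕ) (p : ℝ) (y : Fin M → Bool) : ℝ :=
  p ^ hammingWt y * (1 - p) ^ (M - hammingWt y)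

/-- The `M`-interval mutual information of the binary asymmetric vector channel. -/
noncomputable def CM (M : ℕ) (p01 p11 w : ℝ) : ℝ :=
  (∑ y : Fin M → Bool,
      Real.negMulLog ((1 - w) * bernVec M p01 y + w * bernVec M p11 y)) -
    M * (w * H2 p11 + (1 - w) * H2 p01)

open Set Topology ProbabilityTheory

section TailIntegral

variable {E : Type*} [NormedAddCommGroup E] [NormedSpace ℝ E] {f : ℝ → E} {μ : Measure ℝ}

theorem tendsto_setIntegral_Ioi_atTop (hf : Integrable f μ) :
    Tendsto (fun x => ∫ u in Ioi x, f u ∂μ) atTop (𝓝 0) := by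
  have hempty : ⋂ x : ℝ, Ioi x = ∅ :=
    eq_empty_of_forall_notMem fun u hu => lt_irrefl u (mem_iInter.mp hu u)
  simpa [hempty] using tendsto_setIntegral_of_antitone (fun _ => measurableSet_Ioi)
    (fun _ _ hab => Ioi_subset_Ioi hab) ⟨0, hf.integrableOn⟩

theorem tendsto_setIntegral_Ioi_atBot (hf : Integrable f μ) :
    Tendsto (fun x => ∫ u in Ioi x, f u ∂μ) atBot (𝓝 (∫ u, f u ∂μ)) := by
  have hunion : ⋃ x : ℝᵒᵈ, Ioi (OrderDual.ofDual x) = univ :=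
    eq_univ_of_forall fun u => mem_iUnion.2 ⟨OrderDual.toDual (u - 1), by simp⟩
  have h := tendsto_setIntegral_of_monotone (ι := ℝᵒᵈ) (μ := μ)
    (s := fun x => Ioi (OrderDual.ofDual x)) (fun _ => measurableSet_Ioi)
    (fun _ _ hab => Ioi_subset_Ioi hab) hf.integrableOn
  rwa [hunion, setIntegral_univ] at h

end TailIntegral

theorem gaussQ_eq_setIntegral_gaussianPDFReal (x : ℝ) :
    gaussQ x = ∫ u in Ioi x, gaussianPDFReal 0 1 u := by
  simp [gaussQ, gaussianPDFReal]

theorem tendsto_gaussQ_atTop : Tendsto gaussQ atTop (𝓝 0) := by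
  simpa only [← gaussQ_eq_setIntegral_gaussianPDFReal] using
    tendsto_setIntegral_Ioi_atTop (integrable_gaussianPDFReal 0 1)

theorem tendsto_gaussQ_atBot : Tendsto gaussQ atBot (𝓝 1) := by
  simpa only [← gaussQ_eq_setIntegral_gaussianPDFReal,
    integral_gaussianPDFReal_eq_one 0 one_ne_zero] using
    tendsto_setIntegral_Ioi_atBot (integrable_gaussianPDFReal 0 1)

section DivNhdsGTZero

variable {𝕜 α : Type*} [Field 𝕜] [LinearOrder 𝕜] [IsStrictOrderedRing 𝕜] [TopologicalSpace 𝕜]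
  [OrderTopology 𝕜] {l : Filter α} {g : α → 𝕜} {c : 𝕜}

theorem Filter.Tendsto.const_div_atTop_of_nhdsGT_zero (hg : Tendsto g l (𝓝[>] 0)) (hc : 0 < c) :
    Tendsto (fun a => c / g a) l atTop := by
  simpa only [div_eq_mul_inv, Pi.inv_apply] using hg.inv_tendsto_nhdsGT_zero.const_mul_atTop hc

theorem Filter.Tendsto.const_div_atBot_of_nhdsGT_zero (hg : Tendsto g l (𝓝[>] 0)) (hc : c < 0) :
    Tendsto (fun a => c / g a) l atBot := by
  simpa only [div_eq_mul_inv, Pi.inv_apply] using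
    hg.inv_tendsto_nhdsGT_zero.const_mul_atTop_of_neg hc

end DivNhdsGTZero

theorem tendsto_sqrt_sq_div_add_sq_nhdsGT_zero (M : ℕ) :
    Tendsto (fun p : ℝ × ℝ => √(p.2 ^ 2 / M + p.1 ^ 2)) (𝓝[>] 0 ×ˢ 𝓝[>] 0) (𝓝[>] 0) := by
  refine tendsto_nhdsWithin_iff.2 ⟨?_, ?_⟩
  · have hcont : Continuous fun p : ℝ × ℝ => √(p.2 ^ 2 / M + p.1 ^ 2) := by fun_prop
    refine (hcont.tendsto' (0, 0) 0 (by simp)).mono_left ?_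
    rw [nhds_prod_eq]
    exact Filter.prod_mono nhdsWithin_le_nhds nhdsWithin_le_nhds
  · filter_upwards [prod_mem_prod self_mem_nhdsWithin univ_mem] with p hp
    have : 0 < p.1 := hp.1
    exact sqrt_pos.2 (by positivity)

theorem H2_eq_negMulLog (x : ℝ) : H2 x = negMulLog x + negMulLog (1 - x) := by
  simp only [H2, negMulLog]
  ring

@[fun_prop]
theorem continuous_H2 : Continuous H2 := by
  simp only [funext H2_eq_negMulLog]
  fun_prop

theorem continuous_CM (M : ℕ) (w : ℝ) : Continuous fun q : ℝ × ℝ => CM M q.1 q.2 w := by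
  unfold CM bernVec
  refine Continuous.sub (continuous_finsetSum _ fun y _ => ?_) (by fun_prop)
  exact continuous_negMulLog.comp (by fun_prop)

theorem stmt_5_general (M : ℕ) (hM : 1 ≤ M) (γb γt w Ae zth : ℝ)
    (hz1 : 0 < zth) (hz2 : zth < Ae) :
    Tendsto (fun p : ℝ × ℝ =>
        CM M γb γt w -
          CM M
            ((1 - γb) * gaussQ (Real.sqrt M * zth / p.2) +
              γb * gaussQ ((zth - Ae) / Real.sqrt (p.2 ^ 2 / M + p.1 ^ 2)))
            ((1 - γt) * gaussQ (Real.sqrt M * zth / p.2) +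
              γt * gaussQ ((zth - Ae) / Real.sqrt (p.2 ^ 2 / M + p.1 ^ 2)))
            w)
      ((nhdsWithin 0 (Set.Ioi 0)) ×ˢ (nhdsWithin 0 (Set.Ioi 0))) (nhds 0) := by
  have hthermal : Tendsto (fun p : ℝ × ℝ => gaussQ (√M * zth / p.2))
      (𝓝[>] 0 ×ˢ 𝓝[>] 0) (𝓝 0) :=
    tendsto_gaussQ_atTop.comp <| tendsto_snd.const_div_atTop_of_nhdsGT_zero <|
      mul_pos (sqrt_pos.2 (Nat.cast_pos.2 hM)) hz1
  have hshot : Tendsto (fun p : ℝ × ℝ => gaussQ ((zth - Ae) / √(p.2 ^ 2 / M + p.1 ^ 2)))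
      (𝓝[>] 0 ×ˢ 𝓝[>] 0) (𝓝 1) :=
    tendsto_gaussQ_atBot.comp <|
      (tendsto_sqrt_sq_div_add_sq_nhdsGT_zero M).const_div_atBot_of_nhdsGT_zero (by linarith)
  have hmix (γ : ℝ) : Tendsto (fun p : ℝ × ℝ => (1 - γ) * gaussQ (√M * zth / p.2) +
      γ * gaussQ ((zth - Ae) / √(p.2 ^ 2 / M + p.1 ^ 2))) (𝓝[>] 0 ×ˢ 𝓝[>] 0) (𝓝 γ) := by
    simpa using (hthermal.const_mul (1 - γ)).add (hshot.const_mul γ)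
  have hCM := ((continuous_CM M w).tendsto (γb, γt)).comp ((hmix γb).prodMk_nhds (hmix γt))
  simpa using (tendsto_const_nhds (x := CM M γb γt w)).sub hCM

theorem stmt_5 (M : ℕ) (hM : 1 ≤ M) (γb γt w Ae zth : ℝ)
    (hγb : 0 < γb) (hγbt : γb < γt) (hγt : γt < 1)
    (hw : w ∈ Set.Ioo (0 : ℝ) 1) (hAe : 0 < Ae)
    (hz1 : 0 < zth) (hz2 : zth < Ae) :
    Tendsto (fun p : ℝ × ℝ =>
        CM M γb γt w -
          CM M
            ((1 - γb) * gaussQ (Real.sqrt M * zth / p.2) +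
              γb * gaussQ ((zth - Ae) / Real.sqrt (p.2 ^ 2 / M + p.1 ^ 2)))
            ((1 - γt) * gaussQ (Real.sqrt M * zth / p.2) +
              γt * gaussQ ((zth - Ae) / Real.sqrt (p.2 ^ 2 / M + p.1 ^ 2)))
            w)
      ((nhdsWithin 0 (Set.Ioi 0)) ×ˢ (nhdsWithin 0 (Set.Ioi 0))) (nhds 0) :=
  stmt_5_general M hM γb γt w Ae zth hz1 hz2
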